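/- In the fused bidirectional recurrence with W_f = W_b = W, if W A^Δ B ≠ 0 for all Δ with 0 ≤ Δ ≤ N−1 (interpreting A^0 = I), then for every position i and every k in {1,...,N}, the Jacobian of y_i with respect to x_k is nonzero; i.e., every input influences every output. -/

import Mathlib

/-!
The output `y_i` is linear in the input sequence, so as a function of `x_k` alone it is affine,
`y_i = M_{ik} x_k + const`, and its Jacobian is the constant matrix `M_{ik}`. The forward scan
contributes `W A^{i-k} B` when `k ≤ i` and the backward scan `W A^{k-i} B` when `i ≤ k`; for
`k ≠ i` exactly one of them is present, and for `k = i` they add up to `2 W B`. In every case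
the nondegeneracy hypothesis makes `M_{ik}` nonzero.
-/

open Finset Matrix

/-- Fused bidirectional state-space representation
`y_i = W_f h_i + W_b ĥ_i` with
`h_i = ∑_{m=1}^i A^{i-m} B x_m` and `ĥ_i = ∑_{m=i}^N A^{m-i} B x_m`. -/
def fusedOutput {d e p : ℕ} (N : ℕ) (A : Matrix (Fin d) (Fin d) ℝ)
    (B : Matrix (Fin d) (Fin e) ℝ)
    (Wf Wb : Matrix (Fin p) (Fin d) ℝ)
    (x : ℕ → Fin e → ℝ) (i : ℕ) : Fin p → ℝ :=
  Wf.mulVec (∑ m ∈ Finset.Icc 1 i, (A ^ (i - m) * B).mulVec (x m))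
    + Wb.mulVec (∑ m ∈ Finset.Icc i N, (A ^ (m - i) * B).mulVec (x m))

/-- The paper's influence matrix `I_fused(i, k)`. -/
def fusedInfluence {d e p : ℕ} (N : ℕ) (A : Matrix (Fin d) (Fin d) ℝ)
    (B : Matrix (Fin d) (Fin e) ℝ) (Wf Wb : Matrix (Fin p) (Fin d) ℝ) (i k : ℕ) :
    Matrix (Fin p) (Fin e) ℝ :=
  (if k ∈ Icc 1 i then Wf * A ^ (i - k) * B else 0)
    + (if k ∈ Icc i N then Wb * A ^ (k - i) * B else 0)

lemma sum_mulVec_update {ι m n R : Type*} [DecidableEq ι] [Fintype n]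
    [NonUnitalNonAssocSemiring R] (s : Finset ι) (C : ι → Matrix m n R) (x : ι → n → R)
    (k : ι) (u : n → R) :
    ∑ j ∈ s, C j *ᵥ Function.update x k u j
      = (if k ∈ s then C k *ᵥ u else 0) + ∑ j ∈ s, C j *ᵥ Function.update x k 0 j := by
  have hsplit : Function.update x k u = Function.update x k 0 + Pi.single k u := by
    have h := Function.update_add x 0 k 0 u
    rwa [add_zero, zero_add] at h
  have hsingle :
      ∀ j, C j *ᵥ (Pi.single k u : ι → n → R) j = if j = k then C k *ᵥ u else 0 := by
    intro j
    rw [Pi.single_apply]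
    split_ifs with h
    · rw [h]
    · exact mulVec_zero _
  simp only [hsplit, Pi.add_apply, mulVec_add, sum_add_distrib, hsingle, sum_ite_eq']
  exact add_comm _ _

lemma fusedOutput_update {d e p : ℕ} (N : ℕ) (A : Matrix (Fin d) (Fin d) ℝ)
    (B : Matrix (Fin d) (Fin e) ℝ) (Wf Wb : Matrix (Fin p) (Fin d) ℝ)
    (x : ℕ → Fin e → ℝ) (i k : ℕ) (u : Fin e → ℝ) :
    fusedOutput N A B Wf Wb (Function.update x k u) i
      = fusedInfluence N A B Wf Wb i k *ᵥ u
        + fusedOutput N A B Wf Wb (Function.update x k 0) i := by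
  have hmul : ∀ (P : Prop) [Decidable P] (W : Matrix (Fin p) (Fin d) ℝ)
      (C : Matrix (Fin d) (Fin e) ℝ),
      W *ᵥ (if P then C *ᵥ u else 0) = (if P then W * C else 0) *ᵥ u := by
    intro P _ W C
    split_ifs
    · exact mulVec_mulVec _ _ _
    · simp
  rw [fusedOutput, fusedOutput, sum_mulVec_update, sum_mulVec_update (Icc i N)]
  simp only [fusedInfluence, mulVec_add, add_mulVec, hmul, Matrix.mul_assoc]
  abel

lemma hasFDerivAt_fusedOutput_update {d e p : ℕ} (N : ℕ) (A : Matrix (Fin d) (Fin d) ℝ)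
    (B : Matrix (Fin d) (Fin e) ℝ) (Wf Wb : Matrix (Fin p) (Fin d) ℝ)
    (x : ℕ → Fin e → ℝ) (i k : ℕ) (v : Fin e → ℝ) :
    HasFDerivAt (fun u => fusedOutput N A B Wf Wb (Function.update x k u) i)
      (LinearMap.toContinuousLinearMap (Matrix.toLin' (fusedInfluence N A B Wf Wb i k))) v := by
  rw [funext (fusedOutput_update N A B Wf Wb x i k)]
  simpa using (LinearMap.toContinuousLinearMap
    (Matrix.toLin' (fusedInfluence N A B Wf Wb i k))).hasFDerivAt.add_const
      (fusedOutput N A B Wf Wb (Function.update x k 0) i) (x := v)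

lemma fusedInfluence_ne_zero {d e p N : ℕ} {A : Matrix (Fin d) (Fin d) ℝ}
    {B : Matrix (Fin d) (Fin e) ℝ} {W : Matrix (Fin p) (Fin d) ℝ}
    (hnondeg : ∀ Δ : ℕ, Δ ≤ N - 1 → W * A ^ Δ * B ≠ 0)
    {i k : ℕ} (hi1 : 1 ≤ i) (hiN : i ≤ N) (hk1 : 1 ≤ k) (hkN : k ≤ N) :
    fusedInfluence N A B W W i k ≠ 0 := by
  rcases lt_trichotomy k i with hlt | rfl | hgt
  · have hk : k ∉ Icc i N := by simp [hlt]
    simpa [fusedInfluence, hk, hk1, hlt.le] using hnondeg (i - k) (by omega)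
  · have hWB : W * B ≠ 0 := by simpa using hnondeg 0 (Nat.zero_le _)
    simpa [fusedInfluence, hk1, hkN, ← two_smul ℝ (W * B)] using hWB
  · have hk : k ∉ Icc 1 i := by simp [hgt]
    simpa [fusedInfluence, hk, hkN, hgt.le] using hnondeg (k - i) (by omega)

theorem global_receptive_field (d e p N : ℕ)
    (A : Matrix (Fin d) (Fin d) ℝ) (B : Matrix (Fin d) (Fin e) ℝ)
    (W : Matrix (Fin p) (Fin d) ℝ)
    (hnondeg : ∀ Δ : ℕ, Δ ≤ N - 1 → W * A ^ Δ * B ≠ 0)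
    (x : ℕ → Fin e → ℝ) :
    ∀ i k : ℕ, 1 ≤ i → i ≤ N → 1 ≤ k → k ≤ N →
      fderiv ℝ (fun u => fusedOutput N A B W W (Function.update x k u) i)
        (x k) ≠ 0 := by
  intro i k hi1 hiN hk1 hkN
  rw [(hasFDerivAt_fusedOutput_update N A B W W x i k (x k)).fderiv, Ne,
    LinearEquiv.map_eq_zero_iff, LinearEquiv.map_eq_zero_iff]
  exact fusedInfluence_ne_zero hnondeg hi1 hiN hk1 hkN
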